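/- For an alphabet A ⊆ U, a pair (X,Y) is an ⟨A,A⟩-model of a program P iff: (1) X = Y or X ⊊ Y∩A; (2) Y ⊨ P and for each Y' ⊊ Y, Y' ⊨ P^Y implies Y'∩A ⊊ Y∩A; and (3) if X ⊊ Y then there exists X' ⊆ Y with X'∩A = X such that X' ⊨ P^Y. (I.e., ⟨A,A⟩-models coincide with relativized A-SE-models.) -/

import Mathlib

structure Rule (α : Type*) where
  head : Finset α
  pbody : Finset α
  nbody : Finset α
deriving DecidableEq

abbrev Program (α : Type*) := Finset (Rule α)

variable {α : Type*} [DecidableEq α]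

/-- An interpretation `Y` satisfies a rule. -/
def satRule (Y : Finset α) (r : Rule α) : Prop :=
  r.pbody ⊆ Y → r.nbody ∩ Y = ∅ → (r.head ∩ Y).Nonempty

/-- `Y` is a model of the program `P`. -/
def satProg (Y : Finset α) (P : Program α) : Prop := ∀ r ∈ P, satRule Y r

/-- The Gelfond–Lifschitz reduct `P^Y`. -/
def reduct (P : Program α) (Y : Finset α) : Program α :=
  (P.filter (fun r => r.nbody ∩ Y = ∅)).image (fun r => ⟨r.head, r.pbody, ∅⟩)

/-- `Y` is an answer set of `P`: a minimal model of `P^Y`. -/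
def isAS (P : Program α) (Y : Finset α) : Prop :=
  satProg Y (reduct P Y) ∧ ∀ Z, Z ⊂ Y → ¬ satProg Z (reduct P Y)

def heads (P : Program α) : Finset α := P.biUnion Rule.head
def bodies (P : Program α) : Finset α := P.biUnion (fun r => r.pbody ∪ r.nbody)

/-- A positive program: no default negation. -/
def Positive (P : Program α) : Prop := ∀ r ∈ P, r.nbody = ∅

/-- A unary program: only facts `a ←` and rules `a ← b`. -/
def Unary (P : Program α) : Prop :=
  ∀ r ∈ P, r.nbody = ∅ ∧ r.head.card = 1 ∧ r.pbody.card ≤ 1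

/-- Membership in the class `C_⟨H,B⟩`. -/
def inClass (H B : Finset α) (P : Program α) : Prop := heads P ⊆ H ∧ bodies P ⊆ B

/-- `V ⪯_H^B Z`. -/
def preceq (H B V Z : Finset α) : Prop := V ∩ H ⊆ Z ∩ H ∧ Z ∩ B ⊆ V ∩ B

/-- `V ≺_H^B Z`. -/
def prec (H B V Z : Finset α) : Prop := preceq H B V Z ∧ V ∩ (H ∪ B) ≠ Z ∩ (H ∪ B)

/-- `Y` is an `H`-total model of `P`. -/
def Htotal (H : Finset α) (P : Program α) (Y : Finset α) : Prop :=
  satProg Y P ∧ ∀ Z, Z ⊂ Y → satProg Z (reduct P Y) → Z ∩ H ⊂ Y ∩ H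

/-- The containment `P ⊆_⟨H,B⟩ Q`. -/
def containsHB (H B : Finset α) (P Q : Program α) : Prop :=
  ∀ R : Program α, inClass H B R → ∀ Y, isAS (P ∪ R) Y → isAS (Q ∪ R) Y

/-- The equivalence `P ≡_⟨H,B⟩ Q`. -/
def equivHB (H B : Finset α) (P Q : Program α) : Prop :=
  ∀ R : Program α, inClass H B R → ∀ Y, isAS (P ∪ R) Y ↔ isAS (Q ∪ R) Y

/-- A witness against `P ⊆_⟨H,B⟩ Q`. -/
def Witness (H B : Finset α) (P Q : Program α) (X Y : Finset α) : Prop :=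
  X ⊆ Y ∧ Htotal H P Y ∧
    (satProg Y Q → X ⊂ Y ∧ satProg X (reduct Q Y) ∧
      ∀ X', preceq H B X X' → X' ⊂ Y → ¬ satProg X' (reduct P Y))

/-- `(X,Y)` is `⪯_H^B`-maximal for `P`. -/
def maximalHB (H B : Finset α) (P : Program α) (X Y : Finset α) : Prop :=
  satProg X (reduct P Y) ∧ ∀ X', prec H B X X' → X' ⊂ Y → ¬ satProg X' (reduct P Y)

/-- `(X,Y)` is an `⟨H,B⟩`-model of `P`. -/
def HBmodel (H B : Finset α) (P : Program α) (X Y : Finset α) : Prop :=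
  X ⊆ Y ∧ Htotal H P Y ∧
    (X ⊂ Y → ∃ X', X' ⊂ Y ∧ X' ∩ (H ∪ B) = X ∧ maximalHB H B P X' Y)

/-!
For `H = B = A` the preorder `⪯_A^A` only compares traces on `A`, so `≺_A^A` is empty and
`⪯_A^A`-maximality is just being a model of the reduct. The `A`-totality of `Y` then makes a
witness `X' ⊆ Y` with `X' ∩ A = X` a proper subset of `Y` exactly when `X ⊊ Y ∩ A`.
-/

theorem not_prec_same (A V Z : Finset α) : ¬ prec A A V Z := by
  rintro ⟨⟨hVZ, hZV⟩, hne⟩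
  rw [Finset.union_self] at hne
  exact hne (hVZ.antisymm hZV)

theorem maximalHB_same_iff {A : Finset α} {P : Program α} {X Y : Finset α} :
    maximalHB A A P X Y ↔ satProg X (reduct P Y) :=
  and_iff_left fun _ hprec => (not_prec_same A X _ hprec).elim

theorem HBmodel_same_iff {A : Finset α} {P : Program α} {X Y : Finset α} :
    HBmodel A A P X Y ↔ X ⊆ Y ∧ Htotal A P Y ∧
      (X ⊂ Y → ∃ X', X' ⊂ Y ∧ X' ∩ A = X ∧ satProg X' (reduct P Y)) := by
  simp only [HBmodel, Finset.union_self, maximalHB_same_iff]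

theorem Htotal.exists_ssubset_inter_eq_iff {H : Finset α} {P : Program α} {X Y : Finset α}
    (hY : Htotal H P Y) :
    (∃ X', X' ⊂ Y ∧ X' ∩ H = X ∧ satProg X' (reduct P Y)) ↔
      X ⊂ Y ∩ H ∧ ∃ X' ⊆ Y, X' ∩ H = X ∧ satProg X' (reduct P Y) := by
  constructor
  · rintro ⟨X', hX'Y, rfl, hsat⟩
    exact ⟨hY.2 X' hX'Y hsat, X', hX'Y.subset, rfl, hsat⟩
  · rintro ⟨hX, X', hX'Y, rfl, hsat⟩
    have hne : X' ≠ Y := by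
      rintro rfl
      exact hX.ne rfl
    exact ⟨X', hX'Y.ssubset_of_ne hne, rfl, hsat⟩

theorem AA_models_are_relativized_SE_models (A : Finset α) (P : Program α)
    (X Y : Finset α) :
    HBmodel A A P X Y ↔
      (X = Y ∨ X ⊂ Y ∩ A) ∧
      (satProg Y P ∧ ∀ Y', Y' ⊂ Y → satProg Y' (reduct P Y) → Y' ∩ A ⊂ Y ∩ A) ∧
      (X ⊂ Y → ∃ X' ⊆ Y, X' ∩ A = X ∧ satProg X' (reduct P Y)) := by
  rw [HBmodel_same_iff]
  constructor
  · rintro ⟨hXY, hY, hwit⟩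
    have hwit' := fun hss => hY.exists_ssubset_inter_eq_iff.1 (hwit hss)
    exact ⟨hXY.eq_or_ssubset.imp_right fun hss => (hwit' hss).1, hY,
      fun hss => (hwit' hss).2⟩
  · rintro ⟨hX, hY : Htotal A P Y, hwit⟩
    have hXY : X ⊆ Y := hX.elim (·.le) fun h => h.subset.trans Finset.inter_subset_left
    exact ⟨hXY, hY, fun hss =>
      hY.exists_ssubset_inter_eq_iff.2 ⟨hX.resolve_left hss.ne, hwit hss⟩⟩
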